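/- Let W be a continuous distance monoid and M a W-metric space. Then the quotient Cseq(M)/≡ of the set of Cauchy sequences on M by the equivalence ≡, equipped with the induced distance d*_C([p], [q]) = d_C(p, q) (which is well defined on equivalence classes), is a Cauchy complete W-metric space. -/

import Mathlib

/-- A complete distance monoid: a commutative positively linearly ordered monoid whose
order is a complete linear order with least element `0`, and in which addition
distributes over infima. -/
class CompleteDistMonoid (W : Type*) extends AddCommMonoid W, CompleteLinearOrder W where
  bot_eq_zero : (⊥ : W) = 0
  add_le_add_left : ∀ a b : W, a ≤ b → ∀ c : W, c + a ≤ c + b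
  add_le_add_right : ∀ a b : W, a ≤ b → ∀ c : W, a + c ≤ b + c
  add_sInf : ∀ (A : Set W) (b : W), b + sInf A = ⨅ a ∈ A, (a + b)

/-- `W` is continuous at `0` if `0 = inf {a + b | a, b ∈ W⁺}` (where `W⁺ = W \ {0}`). -/
def ContinuousAtZero (W : Type*) [CompleteDistMonoid W] : Prop :=
  sInf {c : W | ∃ a b : W, a ≠ 0 ∧ b ≠ 0 ∧ c = a + b} = 0

/-- `d` is a `W`-metric on `M`. -/
def IsWMetric {W M : Type*} [CompleteDistMonoid W] (d : M → M → W) : Prop :=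
  (∀ x y : M, max (d x y) (d y x) = 0 ↔ x = y) ∧
  ∀ x y z : M, d x z ≤ d x y + d y z

/-- `p : A → M` is a Cauchy sequence on `(M, d)`: `A ⊆ W⁺`, `inf {a + b | a, b ∈ A} = 0`
and `d (p a) (p b) ≤ a + b`.  (Values of `p` outside `A` are irrelevant.) -/
def IsCauchySeqOn {W M : Type*} [CompleteDistMonoid W] (d : M → M → W)
    (A : Set W) (p : W → M) : Prop :=
  (∀ a ∈ A, a ≠ 0) ∧
  sInf {c : W | ∃ a ∈ A, ∃ b ∈ A, c = a + b} = 0 ∧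
  ∀ a ∈ A, ∀ b ∈ A, d (p a) (p b) ≤ a + b

/-- The Cauchy sequence `p : A → M` converges to `x`. -/
def ConvergesTo {W M : Type*} [CompleteDistMonoid W] (d : M → M → W)
    (A : Set W) (p : W → M) (x : M) : Prop :=
  (⨆ a ∈ {a : W | a ≠ 0}, ⨅ b ∈ {b ∈ A | b ≤ a}, d x (p b)) = 0 ∧
  (⨆ a ∈ {a : W | a ≠ 0}, ⨅ b ∈ {b ∈ A | b ≤ a}, d (p b) x) = 0

/-- `(M, d)` is Cauchy complete: every Cauchy sequence converges to some element. -/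
def CauchyComplete {W M : Type*} [CompleteDistMonoid W] (d : M → M → W) : Prop :=
  ∀ (A : Set W) (p : W → M), IsCauchySeqOn d A p → ∃ x : M, ConvergesTo d A p x

/-- The distance `d_C` between two Cauchy sequences. -/
noncomputable def dC {W M : Type*} [CompleteDistMonoid W] (d : M → M → W)
    (A : Set W) (p : W → M) (B : Set W) (q : W → M) : W :=
  ⨆ c ∈ {c : W | c ≠ 0}, ⨅ a ∈ {a ∈ A | a ≤ c}, ⨅ b ∈ {b ∈ B | b ≤ c}, d (p a) (q b)

/-- Equivalence of Cauchy sequences: `p ≡ q` iff `d_C(p,q) = 0` and `d_C(q,p) = 0`. -/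
def CEquiv {W M : Type*} [CompleteDistMonoid W] (d : M → M → W)
    (A : Set W) (p : W → M) (B : Set W) (q : W → M) : Prop :=
  dC d A p B q = 0 ∧ dC d B q A p = 0

/-- The set of Cauchy sequences on `(M, d)` (a pair: domain and map). -/
def CSeq {W M : Type*} [CompleteDistMonoid W] (d : M → M → W) :=
  {Ap : Set W × (W → M) // IsCauchySeqOn d Ap.1 Ap.2}

/-- The equivalence `≡` on Cauchy sequences. -/
def csRel {W M : Type*} [CompleteDistMonoid W] (d : M → M → W) (p q : CSeq d) : Prop :=
  CEquiv d p.1.1 p.1.2 q.1.1 q.1.2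

/-- The quotient `Cseq(M)/≡` of the set of Cauchy sequences by `≡`. -/
def CQuot {W M : Type*} [CompleteDistMonoid W] (d : M → M → W) := Quot (csRel d)

/-- The induced distance on the quotient `Cseq(M)/≡`, computed on representatives. -/
noncomputable def dQ {W M : Type*} [CompleteDistMonoid W] (d : M → M → W)
    (x y : CQuot d) : W :=
  dC d x.out.1.1 x.out.1.2 y.out.1.1 y.out.1.2

/-!
The distance `dC d A p B q` differs from `d (p a) (q b)` by at most `a + b` for all `a ∈ A`,
`b ∈ B`, in both directions. Continuity at `0` lets such error terms be absorbed, which gives the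
triangle inequality for `dC`; hence `≡` is an equivalence, `dC` is constant on classes, and the
quotient is a `W`-metric space. A Cauchy sequence `a ↦ [S a]` of classes converges to the class of
its diagonal, which takes at `a + a` a term of `S a` of index below `a`: the diagonal is Cauchy and
lies within `a` of every `S a` in both directions.
-/

namespace CompleteDistMonoid

variable {W : Type*} [CompleteDistMonoid W]

instance : IsOrderedAddMonoid W where
  add_le_add_left a b h c := CompleteDistMonoid.add_le_add_right a b h c

protected theorem zero_le (a : W) : 0 ≤ a := bot_eq_zero (W := W) ▸ bot_le

protected theorem le_zero_iff {a : W} : a ≤ 0 ↔ a = 0 :=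
  bot_eq_zero (W := W) ▸ le_bot_iff

protected theorem pos_of_ne_zero {a : W} (ha : a ≠ 0) : 0 < a :=
  (CompleteDistMonoid.zero_le a).lt_of_ne' ha

protected theorem le_add_right (a b : W) : a ≤ a + b :=
  le_add_of_nonneg_right (CompleteDistMonoid.zero_le b)

theorem min_ne_zero {a b : W} (ha : a ≠ 0) (hb : b ≠ 0) : min a b ≠ 0 := by
  rcases min_choice a b with h | h <;> rwa [h]

theorem exists_add_self_lt (hW : ContinuousAtZero W) {c : W} (hc : c ≠ 0) :
    ∃ δ ≠ 0, δ + δ < c := by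
  have : sInf {c : W | ∃ a b : W, a ≠ 0 ∧ b ≠ 0 ∧ c = a + b} < c := by
    rw [hW]; exact CompleteDistMonoid.pos_of_ne_zero hc
  obtain ⟨_, ⟨a, b, ha, hb, rfl⟩, hab⟩ := sInf_lt_iff.mp this
  exact ⟨min a b, min_ne_zero ha hb,
    lt_of_le_of_lt (add_le_add (min_le_left a b) (min_le_right a b)) hab⟩

theorem exists_nsmul_lt (hW : ContinuousAtZero W) (n : ℕ) {c : W} (hc : c ≠ 0) :
    ∃ ε ≠ 0, n • ε < c := by
  induction n generalizing c with
  | zero => exact ⟨c, hc, by simpa using CompleteDistMonoid.pos_of_ne_zero hc⟩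
  | succ n ih =>
    obtain ⟨δ, hδ, hδc⟩ := exists_add_self_lt hW hc
    obtain ⟨ε, hε, hεδ⟩ := ih hδ
    refine ⟨min ε δ, min_ne_zero hε hδ, ?_⟩
    calc (n + 1) • min ε δ = n • min ε δ + min ε δ := succ_nsmul _ _
      _ ≤ δ + δ := add_le_add ((nsmul_le_nsmul_right (min_le_left ε δ) n).trans hεδ.le)
          (min_le_right ε δ)
      _ < c := hδc

theorem sInf_setOf_ne_zero (hW : ContinuousAtZero W) : sInf {ε : W | ε ≠ 0} = 0 := by
  refine CompleteDistMonoid.le_zero_iff.mp ((le_sInf ?_).trans hW.le)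
  rintro _ ⟨a, b, ha, -, rfl⟩
  exact (sInf_le ha).trans (CompleteDistMonoid.le_add_right _ b)

theorem le_of_forall_ne_zero_le_add (hW : ContinuousAtZero W) {x K : W}
    (h : ∀ ε ≠ 0, x ≤ K + ε) : x ≤ K := by
  have : x ≤ K + sInf {ε : W | ε ≠ 0} := by
    rw [add_sInf]
    exact le_iInf₂ fun ε hε => (h ε hε).trans_eq (add_comm K ε)
  rwa [sInf_setOf_ne_zero hW, add_zero] at this

theorem le_of_forall_ne_zero_le_add_nsmul (hW : ContinuousAtZero W) (n : ℕ) {x K : W}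
    (h : ∀ ε ≠ 0, x ≤ K + n • ε) : x ≤ K := by
  refine le_of_forall_ne_zero_le_add hW fun ε hε => ?_
  obtain ⟨ε', hε', hε'ε⟩ := exists_nsmul_lt hW n hε
  exact (h ε' hε').trans (by gcongr)

theorem le_iInf_add {ι : Sort*} {f : ι → W} {x K : W} (h : ∀ i, x ≤ f i + K) :
    x ≤ (⨅ i, f i) + K := by
  rw [add_comm, ← sInf_range, add_sInf]
  exact le_iInf₂ fun _ ⟨i, hi⟩ => hi ▸ h i

theorem exists_mem_lt_of_sInf_add_eq_zero {A : Set W}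
    (hA : sInf {c : W | ∃ a ∈ A, ∃ b ∈ A, c = a + b} = 0) {c : W} (hc : c ≠ 0) :
    ∃ a ∈ A, a < c := by
  have : sInf {c : W | ∃ a ∈ A, ∃ b ∈ A, c = a + b} < c := by
    rw [hA]; exact CompleteDistMonoid.pos_of_ne_zero hc
  obtain ⟨_, ⟨a, ha, b, -, rfl⟩, hab⟩ := sInf_lt_iff.mp this
  exact ⟨a, ha, (CompleteDistMonoid.le_add_right _ b).trans_lt hab⟩

theorem sInf_eq_zero_of_forall_exists_lt {S : Set W} (h : ∀ c ≠ 0, ∃ s ∈ S, s < c) :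
    sInf S = 0 := by
  by_contra h0
  obtain ⟨s, hs, hlt⟩ := h _ h0
  exact (sInf_le hs).not_gt hlt

theorem sInf_add_eq_zero (hW : ContinuousAtZero W) {A : Set W}
    (hA : ∀ c ≠ 0, ∃ a ∈ A, a < c) : sInf {c : W | ∃ a ∈ A, ∃ b ∈ A, c = a + b} = 0 := by
  refine sInf_eq_zero_of_forall_exists_lt fun c hc => ?_
  obtain ⟨δ, hδ, hδc⟩ := exists_add_self_lt hW hc
  obtain ⟨a, ha, haδ⟩ := hA δ hδ
  exact ⟨a + a, ⟨a, ha, a, ha, rfl⟩, (add_le_add haδ.le haδ.le).trans_lt hδc⟩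

theorem exists_mem_lt_lt {A : Set W} (hA : ∀ c ≠ 0, ∃ a ∈ A, a < c) {c ε : W} (hc : c ≠ 0)
    (hε : ε ≠ 0) : ∃ a ∈ A, a < c ∧ a < ε := by
  simp_rw [← lt_min_iff]
  exact hA _ (min_ne_zero hc hε)

end CompleteDistMonoid

open CompleteDistMonoid

section CauchySequences

variable {W M : Type*} [CompleteDistMonoid W] {d : M → M → W} {A B C : Set W} {p q r : W → M}

theorem IsWMetric.apply_self (hd : IsWMetric d) (x : M) : d x x = 0 := by
  simpa using (hd.1 x x).mpr rfl

theorem IsWMetric.flip (hd : IsWMetric d) : IsWMetric (flip d) :=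
  ⟨fun x y => max_comm (d y x) (d x y) ▸ hd.1 x y,
    fun x y z => (hd.2 z y x).trans_eq (add_comm _ _)⟩

theorem IsCauchySeqOn.flip (hp : IsCauchySeqOn d A p) : IsCauchySeqOn (flip d) A p :=
  ⟨hp.1, hp.2.1, fun a ha b hb => (hp.2.2 b hb a ha).trans_eq (add_comm b a)⟩

theorem IsCauchySeqOn.exists_lt (hp : IsCauchySeqOn d A p) {c : W} (hc : c ≠ 0) :
    ∃ a ∈ A, a < c :=
  exists_mem_lt_of_sInf_add_eq_zero hp.2.1 hc

theorem IsWMetric.apply_le_add_apply_add (hd : IsWMetric d) (hp : IsCauchySeqOn d A p)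
    (hq : IsCauchySeqOn d B q) {a a' b b' : W} (ha : a ∈ A) (ha' : a' ∈ A) (hb : b ∈ B)
    (hb' : b' ∈ B) : d (p a) (q b) ≤ (a + a') + d (p a') (q b') + (b' + b) :=
  calc d (p a) (q b) ≤ d (p a) (p a') + d (p a') (q b') + d (q b') (q b) :=
        (hd.2 _ (p a') _).trans ((add_le_add_right (hd.2 _ (q b') _) _).trans_eq
          (add_assoc _ _ _).symm)
    _ ≤ (a + a') + d (p a') (q b') + (b' + b) := by
        gcongr
        exacts [hp.2.2 a ha a' ha', hq.2.2 b' hb' b hb]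

theorem dC_flip : dC (flip d) A p B q = dC d B q A p := by
  simp only [dC, Function.flip_def]
  exact iSup_congr fun _ => iSup_congr fun _ => iInf₂_comm _

theorem dC_le_add (hW : ContinuousAtZero W) (hd : IsWMetric d) (hp : IsCauchySeqOn d A p)
    (hq : IsCauchySeqOn d B q) {a b : W} (ha : a ∈ A) (hb : b ∈ B) :
    dC d A p B q ≤ d (p a) (q b) + (a + b) := by
  refine iSup₂_le fun c hc => le_of_forall_ne_zero_le_add_nsmul hW 2 fun ε hε => ?_
  obtain ⟨a', ha', ha'c, ha'ε⟩ := exists_mem_lt_lt (fun _ => hp.exists_lt) hc hε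
  obtain ⟨b', hb', hb'c, hb'ε⟩ := exists_mem_lt_lt (fun _ => hq.exists_lt) hc hε
  calc (⨅ x ∈ {x ∈ A | x ≤ c}, ⨅ y ∈ {y ∈ B | y ≤ c}, d (p x) (q y)) ≤ d (p a') (q b') :=
        iInf₂_le_of_le a' ⟨ha', ha'c.le⟩ (iInf₂_le b' ⟨hb', hb'c.le⟩)
    _ ≤ (a' + a) + d (p a) (q b) + (b + b') := hd.apply_le_add_apply_add hp hq ha' ha hb' hb
    _ = d (p a) (q b) + (a + b) + (a' + b') := by abel
    _ ≤ d (p a) (q b) + (a + b) + 2 • ε := by rw [two_nsmul]; gcongr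

theorem apply_le_dC_add (hW : ContinuousAtZero W) (hd : IsWMetric d) (hp : IsCauchySeqOn d A p)
    (hq : IsCauchySeqOn d B q) {a b : W} (ha : a ∈ A) (hb : b ∈ B) :
    d (p a) (q b) ≤ dC d A p B q + (a + b) := by
  refine le_of_forall_ne_zero_le_add_nsmul hW 2 fun ε hε => ?_
  have hε_le : (⨅ x ∈ {x ∈ A | x ≤ ε}, ⨅ y ∈ {y ∈ B | y ≤ ε}, d (p x) (q y)) ≤ dC d A p B q :=
    le_iSup₂ (f := fun c _ => ⨅ x ∈ {x ∈ A | x ≤ c}, ⨅ y ∈ {y ∈ B | y ≤ c}, d (p x) (q y)) ε hε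
  refine (le_iInf_add fun a' => le_iInf_add fun ha' => le_iInf_add fun b' =>
    le_iInf_add fun hb' => ?_).trans (by rw [add_assoc]; gcongr)
  calc d (p a) (q b) ≤ (a + a') + d (p a') (q b') + (b' + b) :=
        hd.apply_le_add_apply_add hp hq ha ha'.1 hb hb'.1
    _ = d (p a') (q b') + ((a + b) + (a' + b')) := by abel
    _ ≤ d (p a') (q b') + ((a + b) + 2 • ε) := by rw [two_nsmul]; gcongr; exacts [ha'.2, hb'.2]

theorem dC_self (hd : IsWMetric d) (hp : IsCauchySeqOn d A p) : dC d A p A p = 0 := by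
  refine CompleteDistMonoid.le_zero_iff.mp (iSup₂_le fun c hc => ?_)
  obtain ⟨a, ha, hac⟩ := hp.exists_lt hc
  exact iInf₂_le_of_le a ⟨ha, hac.le⟩ (iInf₂_le_of_le a ⟨ha, hac.le⟩ (hd.apply_self _).le)

theorem dC_triangle (hW : ContinuousAtZero W) (hd : IsWMetric d) (hp : IsCauchySeqOn d A p)
    (hq : IsCauchySeqOn d B q) (hr : IsCauchySeqOn d C r) :
    dC d A p C r ≤ dC d A p B q + dC d B q C r := by
  refine le_of_forall_ne_zero_le_add_nsmul hW 6 fun ε hε => ?_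
  obtain ⟨a, ha, haε⟩ := hp.exists_lt hε
  obtain ⟨b, hb, hbε⟩ := hq.exists_lt hε
  obtain ⟨c, hc, hcε⟩ := hr.exists_lt hε
  calc dC d A p C r ≤ d (p a) (r c) + (a + c) := dC_le_add hW hd hp hr ha hc
    _ ≤ d (p a) (q b) + d (q b) (r c) + (a + c) := by gcongr; exact hd.2 _ _ _
    _ ≤ (dC d A p B q + (a + b)) + (dC d B q C r + (b + c)) + (a + c) := by
        gcongr
        exacts [apply_le_dC_add hW hd hp hq ha hb, apply_le_dC_add hW hd hq hr hb hc]
    _ = dC d A p B q + dC d B q C r + (a + b + b + c + a + c) := by abel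
    _ ≤ dC d A p B q + dC d B q C r + 6 • ε := by
        rw [show 6 • ε = ε + ε + ε + ε + ε + ε by abel]
        gcongr

theorem iSup_iInf_eq_zero_of_forall_le {f : W → W} (hA : ∀ c ≠ 0, ∃ a ∈ A, a < c)
    (hf : ∀ a ∈ A, f a ≤ a) : (⨆ c ∈ {c : W | c ≠ 0}, ⨅ a ∈ {a ∈ A | a ≤ c}, f a) = 0 := by
  refine CompleteDistMonoid.le_zero_iff.mp (iSup₂_le fun c hc => ?_)
  by_contra hpos
  obtain ⟨a, ha, hac, halt⟩ := exists_mem_lt_lt hA hc (fun h => hpos h.le)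
  exact (iInf₂_le_of_le a ⟨ha, hac.le⟩ (hf a ha)).not_gt halt

theorem convergesTo_of_forall_le {x : M} (hA : ∀ c ≠ 0, ∃ a ∈ A, a < c)
    (h₁ : ∀ a ∈ A, d x (p a) ≤ a) (h₂ : ∀ a ∈ A, d (p a) x ≤ a) : ConvergesTo d A p x :=
  ⟨iSup_iInf_eq_zero_of_forall_le hA h₁, iSup_iInf_eq_zero_of_forall_le hA h₂⟩

end CauchySequences

section Diagonal

variable {W M : Type*} [CompleteDistMonoid W] {d : M → M → W} {A : Set W}
  {S : W → Set W × (W → M)} {q : W → M}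

-- Indexing by `a + a` absorbs the index `b < a` of the chosen term, so the diagonal is Cauchy.
def IsDiagonal (A : Set W) (S : W → Set W × (W → M)) (q : W → M) : Prop :=
  ∀ e ∈ (fun a => a + a) '' A, ∃ a ∈ A, a + a = e ∧ ∃ b ∈ (S a).1, b < a ∧ q e = (S a).2 b

theorem exists_isDiagonal (hS : ∀ a ∈ A, ∃ b ∈ (S a).1, b < a) : ∃ q, IsDiagonal A S q := by
  have (e : W) : ∃ x : M, e ∈ (fun a => a + a) '' A →
      ∃ a ∈ A, a + a = e ∧ ∃ b ∈ (S a).1, b < a ∧ x = (S a).2 b := by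
    by_cases he : e ∈ (fun a => a + a) '' A
    · obtain ⟨a, ha, rfl⟩ := he
      obtain ⟨b, hb, hba⟩ := hS a ha
      exact ⟨(S a).2 b, fun _ => ⟨a, ha, rfl, b, hb, hba, rfl⟩⟩
    · exact ⟨(S 0).2 0, fun h => absurd h he⟩
  choose q hq using this
  exact ⟨q, hq⟩

variable (hW : ContinuousAtZero W) (hd : IsWMetric d)
  (hS : ∀ a ∈ A, IsCauchySeqOn d (S a).1 (S a).2)
  (hSA : IsCauchySeqOn (fun s t => dC d s.1 s.2 t.1 t.2) A S)
include hW hd hS hSA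

theorem IsDiagonal.isCauchySeqOn (hq : IsDiagonal A S q) :
    IsCauchySeqOn d ((fun a => a + a) '' A) q := by
  refine ⟨?_, sInf_add_eq_zero hW fun c hc => ?_, ?_⟩
  · rintro _ ⟨a, ha, rfl⟩ h
    exact hSA.1 a ha (CompleteDistMonoid.le_zero_iff.mp
      ((CompleteDistMonoid.le_add_right a a).trans_eq h))
  · obtain ⟨δ, hδ, hδc⟩ := exists_add_self_lt hW hc
    obtain ⟨a, ha, haδ⟩ := hSA.exists_lt hδ
    exact ⟨a + a, ⟨a, ha, rfl⟩, (add_le_add haδ.le haδ.le).trans_lt hδc⟩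
  · intro e he e' he'
    obtain ⟨a, ha, rfl, b, hb, hba, hqe⟩ := hq e he
    obtain ⟨a', ha', rfl, b', hb', hb'a', hqe'⟩ := hq e' he'
    calc d (q (a + a)) (q (a' + a'))
        ≤ dC d (S a).1 (S a).2 (S a').1 (S a').2 + (b + b') := by
          rw [hqe, hqe']; exact apply_le_dC_add hW hd (hS a ha) (hS a' ha') hb hb'
      _ ≤ (a + a') + (b + b') := by gcongr; exact hSA.2.2 a ha a' ha'
      _ = (a + b) + (a' + b') := by abel
      _ ≤ (a + a) + (a' + a') := by gcongr

theorem IsDiagonal.dC_left_le (hq : IsDiagonal A S q) {a : W} (ha : a ∈ A) :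
    dC d ((fun a => a + a) '' A) q (S a).1 (S a).2 ≤ a := by
  have hqC := hq.isCauchySeqOn hW hd hS hSA
  refine le_of_forall_ne_zero_le_add_nsmul hW 5 fun ε hε => ?_
  obtain ⟨e, he, heε⟩ := hqC.exists_lt hε
  obtain ⟨b, hb, hbε⟩ := (hS a ha).exists_lt hε
  obtain ⟨a', ha', rfl, b', hb', hb'a', hqe⟩ := hq e he
  have ha'ε : a' < ε := (CompleteDistMonoid.le_add_right a' a').trans_lt heε
  have hb'ε : b' < ε := hb'a'.trans ha'ε
  calc dC d _ q (S a).1 (S a).2 ≤ d (q (a' + a')) ((S a).2 b) + ((a' + a') + b) :=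
        dC_le_add hW hd hqC (hS a ha) he hb
    _ ≤ dC d (S a').1 (S a').2 (S a).1 (S a).2 + (b' + b) + ((a' + a') + b) := by
        rw [hqe]; gcongr; exact apply_le_dC_add hW hd (hS a' ha') (hS a ha) hb' hb
    _ ≤ (a' + a) + (b' + b) + ((a' + a') + b) := by gcongr; exact hSA.2.2 a' ha' a ha
    _ = a + (a' + b' + b + (a' + a') + b) := by abel
    _ ≤ a + 5 • ε := by
        rw [show 5 • ε = ε + ε + ε + ε + ε by abel]
        gcongr

theorem IsDiagonal.dC_right_le (hq : IsDiagonal A S q) {a : W} (ha : a ∈ A) :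
    dC d (S a).1 (S a).2 ((fun a => a + a) '' A) q ≤ a := by
  have hSA' : IsCauchySeqOn (fun s t => dC (flip d) s.1 s.2 t.1 t.2) A S := by
    convert hSA.flip using 1
    funext s t
    exact dC_flip
  rw [← dC_flip]
  exact hq.dC_left_le hW hd.flip (fun a ha => (hS a ha).flip) hSA' ha

end Diagonal

section Completion

variable {W M : Type*} [CompleteDistMonoid W] {d : M → M → W}

theorem csRel_equivalence (hW : ContinuousAtZero W) (hd : IsWMetric d) :
    Equivalence (csRel d) where
  refl p := ⟨dC_self hd p.2, dC_self hd p.2⟩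
  symm h := ⟨h.2, h.1⟩
  trans {p q r} hpq hqr :=
    ⟨CompleteDistMonoid.le_zero_iff.mp
        ((dC_triangle hW hd p.2 q.2 r.2).trans_eq (by rw [hpq.1, hqr.1, add_zero])),
      CompleteDistMonoid.le_zero_iff.mp
        ((dC_triangle hW hd r.2 q.2 p.2).trans_eq (by rw [hqr.2, hpq.2, add_zero]))⟩

theorem dC_congr (hW : ContinuousAtZero W) (hd : IsWMetric d) {p p' q q' : CSeq d}
    (hp : csRel d p p') (hq : csRel d q q') :
    dC d p.1.1 p.1.2 q.1.1 q.1.2 = dC d p'.1.1 p'.1.2 q'.1.1 q'.1.2 := by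
  have key (x x' y y' : CSeq d) (hx : csRel d x x') (hy : csRel d y y') :
      dC d x.1.1 x.1.2 y.1.1 y.1.2 ≤ dC d x'.1.1 x'.1.2 y'.1.1 y'.1.2 :=
    calc dC d x.1.1 x.1.2 y.1.1 y.1.2
        ≤ dC d x.1.1 x.1.2 x'.1.1 x'.1.2 + dC d x'.1.1 x'.1.2 y.1.1 y.1.2 :=
          dC_triangle hW hd x.2 x'.2 y.2
      _ ≤ dC d x.1.1 x.1.2 x'.1.1 x'.1.2 +
          (dC d x'.1.1 x'.1.2 y'.1.1 y'.1.2 + dC d y'.1.1 y'.1.2 y.1.1 y.1.2) := by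
          gcongr; exact dC_triangle hW hd x'.2 y'.2 y.2
      _ = dC d x'.1.1 x'.1.2 y'.1.1 y'.1.2 := by rw [hx.1, hy.2, zero_add, add_zero]
  exact (key p p' q q' hp hq).antisymm (key p' p q' q ⟨hp.2, hp.1⟩ ⟨hq.2, hq.1⟩)

theorem dQ_mk (hW : ContinuousAtZero W) (hd : IsWMetric d) (p q : CSeq d) :
    dQ d (Quot.mk (csRel d) p) (Quot.mk (csRel d) q) = dC d p.1.1 p.1.2 q.1.1 q.1.2 := by
  have out_rel (x : CSeq d) : csRel d (Quot.mk (csRel d) x).out x :=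
    (csRel_equivalence hW hd).eqvGen_iff.mp (Quot.eqvGen_exact (Quot.out_eq _))
  exact dC_congr hW hd (out_rel p) (out_rel q)

theorem isWMetric_dQ (hW : ContinuousAtZero W) (hd : IsWMetric d) : IsWMetric (dQ d) := by
  refine ⟨fun x y => ⟨fun h => ?_, ?_⟩, fun x y z => dC_triangle hW hd x.out.2 y.out.2 z.out.2⟩
  · have hxy : csRel d x.out y.out :=
      ⟨CompleteDistMonoid.le_zero_iff.mp ((le_max_left _ _).trans h.le),
        CompleteDistMonoid.le_zero_iff.mp ((le_max_right _ _).trans h.le)⟩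
    rw [← Quot.out_eq x, ← Quot.out_eq y]
    exact Quot.sound hxy
  · rintro rfl
    rw [max_self]
    exact dC_self hd x.out.2

theorem cauchyComplete_dQ (hW : ContinuousAtZero W) (hd : IsWMetric d) :
    CauchyComplete (dQ d) := by
  intro A P hP
  set S : W → Set W × (W → M) := fun a => (P a).out.1
  have hS (a : W) (_ : a ∈ A) : IsCauchySeqOn d (S a).1 (S a).2 := (P a).out.2
  have hSA : IsCauchySeqOn (fun s t => dC d s.1 s.2 t.1 t.2) A S := hP
  obtain ⟨q, hq⟩ := exists_isDiagonal fun a ha => (hS a ha).exists_lt (hP.1 a ha)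
  set diag : CSeq d := ⟨(_, q), hq.isCauchySeqOn hW hd hS hSA⟩
  have hP_out (a : W) : Quot.mk (csRel d) (P a).out = P a := Quot.out_eq (P a)
  refine ⟨Quot.mk _ diag, convergesTo_of_forall_le (fun _ => hP.exists_lt) (fun a ha => ?_)
    (fun a ha => ?_)⟩
  · rw [← hP_out, dQ_mk hW hd]
    exact hq.dC_left_le hW hd hS hSA ha
  · rw [← hP_out, dQ_mk hW hd]
    exact hq.dC_right_le hW hd hS hSA ha

end Completion

/-- The quotient `Cseq(M)/≡`, with the induced distance (which is well defined on
equivalence classes), is a Cauchy complete `W`-metric space. -/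
theorem stmt11 {W M : Type*} [CompleteDistMonoid W] (hW : ContinuousAtZero W)
    (d : M → M → W) (hd : IsWMetric d) :
    (∀ p q : CSeq d,
        dQ d (Quot.mk (csRel d) p) (Quot.mk (csRel d) q) = dC d p.1.1 p.1.2 q.1.1 q.1.2) ∧
    IsWMetric (dQ d) ∧ CauchyComplete (dQ d) :=
  ⟨dQ_mk hW hd, isWMetric_dQ hW hd, cauchyComplete_dQ hW hd⟩
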